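/- Let h : ℝ^p → ℝ^n be Lebesgue measurable, let Y ⊆ ℝ^p be open with h restricted to Y essentially bounded, and set X := essim(h|_Y). Suppose Ψ : Y × X → ℝ^q is continuous and Ψ(y, h(y)) = 0 for almost every y ∈ Y. Then for every y⋆ ∈ Y and every u ∈ A(h; y⋆), one has Ψ(y⋆, u) = 0. -/

import Mathlib

open MeasureTheory Set Matrix

noncomputable section

/-- The essential image of `h` restricted to `Y`: the set of `z` every neighborhood of
which has preimage of positive measure inside `Y`. -/
def essimOn {α : Type*} [MeasureSpace α] {n : ℕ}
    (h : α → (Fin n → ℝ)) (Y : Set α) : Set (Fin n → ℝ) :=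
  {z | ∀ V : Set (Fin n → ℝ), IsOpen V → z ∈ V → 0 < volume (h ⁻¹' V ∩ Y)}

/-- Left ess-im accumulation set of `v` at `ξ`. -/
def AessL {n : ℕ} (v : ℝ → (Fin n → ℝ)) (ξ : ℝ) : Set (Fin n → ℝ) :=
  ⋂ r > (0:ℝ), essimOn v (Set.Ioo (ξ - r) ξ)

/-- Right ess-im accumulation set of `v` at `ξ`. -/
def AessR {n : ℕ} (v : ℝ → (Fin n → ℝ)) (ξ : ℝ) : Set (Fin n → ℝ) :=
  ⋂ r > (0:ℝ), essimOn v (Set.Ioo ξ (ξ + r))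

/-- Two-sided ess-im accumulation set of `v` at `ξ`. -/
def Aess {n : ℕ} (v : ℝ → (Fin n → ℝ)) (ξ : ℝ) : Set (Fin n → ℝ) :=
  ⋂ r > (0:ℝ), essimOn v (Set.Ioo (ξ - r) (ξ + r))

/-- `ξ` is an ess-im continuity point of `v`. -/
def EssImContPt {n : ℕ} (v : ℝ → (Fin n → ℝ)) (ξ : ℝ) : Prop :=
  ∃ z : Fin n → ℝ, AessL v ξ = {z} ∧ AessR v ξ = {z}

/-- Strictly hyperbolic region: states `u ∈ U` where `A(u) = Df(u)` has `n` distinct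
real eigenvalues. -/
def USH {n : ℕ} (f : (Fin n → ℝ) → (Fin n → ℝ)) (U : Set (Fin n → ℝ)) :
    Set (Fin n → ℝ) :=
  {u | u ∈ U ∧ ∃ lam : Fin n → ℝ, Function.Injective lam ∧
    ∀ i, Module.End.HasEigenvalue
      ((fderiv ℝ f u).toLinearMap : Module.End ℝ (Fin n → ℝ)) (lam i)}

/-- A reduced state function: essentially bounded measurable `v : ℝ → ℝⁿ` with
essential image contained in the strictly hyperbolic region. -/
def IsReducedState {n : ℕ} (f : (Fin n → ℝ) → (Fin n → ℝ)) (U : Set (Fin n → ℝ))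
    (v : ℝ → (Fin n → ℝ)) : Prop :=
  Measurable v ∧ (∃ C : ℝ, ∀ᵐ ξ : ℝ ∂volume, ‖v ξ‖ ≤ C) ∧
    essimOn v Set.univ ⊆ USH f U

/-- `v` is a self-similar weak solution of `u_t + f(u)_x = 0`. -/
def IsSSWeakSol {n : ℕ} (f : (Fin n → ℝ) → (Fin n → ℝ)) (v : ℝ → (Fin n → ℝ)) : Prop :=
  ∀ ψ : ℝ → (Fin n → ℝ), ContDiff ℝ 1 ψ → HasCompactSupport ψ →
    ∫ ξ : ℝ, ((deriv ψ ξ) ⬝ᵥ ((-ξ) • v ξ + f (v ξ)) - (ψ ξ) ⬝ᵥ (v ξ)) = 0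

/-- `det (−ξ I + Df(u))`. -/
def detShift {n : ℕ} (f : (Fin n → ℝ) → (Fin n → ℝ)) (ξ : ℝ) (u : Fin n → ℝ) : ℝ :=
  LinearMap.det (-(ξ • (LinearMap.id : (Fin n → ℝ) →ₗ[ℝ] (Fin n → ℝ)))
    + (fderiv ℝ f u).toLinearMap)

/-- The averaged matrix `M(u⁻, ξ, u⁺) = −ξ I + ∫₀¹ Df((1−τ)u⁻ + τu⁺) dτ`. -/
def Mmat {n : ℕ} (f : (Fin n → ℝ) → (Fin n → ℝ)) (um : Fin n → ℝ) (ξ : ℝ)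
    (up : Fin n → ℝ) : (Fin n → ℝ) →L[ℝ] (Fin n → ℝ) :=
  -(ξ • (1 : (Fin n → ℝ) →L[ℝ] (Fin n → ℝ))) +
    ∫ τ in (0:ℝ)..(1:ℝ), fderiv ℝ f ((1 - τ) • um + τ • up)


/-- The ess-im accumulation set of `h : ℝ^p → ℝ^n` at a point `y`. -/
def AessP {p n : ℕ} (h : (Fin p → ℝ) → (Fin n → ℝ)) (y : Fin p → ℝ) :
    Set (Fin n → ℝ) :=
  ⋂ r > (0:ℝ), essimOn h (Metric.ball y r)

lemma essimOn_mono {α : Type*} [MeasureSpace α] {n : ℕ}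
    (h : α → (Fin n → ℝ)) {Y₁ Y₂ : Set α} (hYY : Y₁ ⊆ Y₂) :
    essimOn h Y₁ ⊆ essimOn h Y₂ := by
  intro z hz V hV hzV
  exact lt_of_lt_of_le (hz V hV hzV)
    (measure_mono (Set.inter_subset_inter_right _ hYY))

lemma ae_mem_essimOn {p n : ℕ} (h : (Fin p → ℝ) → (Fin n → ℝ))
    (hmeas : Measurable h) (Y : Set (Fin p → ℝ)) (hY : MeasurableSet Y) :
    ∀ᵐ y ∂(volume.restrict Y), h y ∈ essimOn h Y := by
  obtain ⟨b, hbc, -, hbasis⟩ :=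
    TopologicalSpace.exists_countable_basis (Fin n → ℝ)
  set T : Set (Set (Fin n → ℝ)) := {B ∈ b | volume (h ⁻¹' B ∩ Y) = 0} with hT
  have hN : (volume.restrict Y) (⋃ B ∈ T, h ⁻¹' B) = 0 := by
    refine le_antisymm ?_ zero_le
    calc (volume.restrict Y) (⋃ B ∈ T, h ⁻¹' B)
        ≤ ∑' B : T, (volume.restrict Y) (h ⁻¹' (B : Set _)) :=
          measure_biUnion_le _ (hbc.mono (Set.sep_subset _ _)) _
      _ = 0 := by
          refine ENNReal.tsum_eq_zero.mpr fun B => ?_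
          have hBopen : IsOpen (B : Set (Fin n → ℝ)) := hbasis.isOpen B.2.1
          rw [Measure.restrict_apply (hBopen.measurableSet.preimage hmeas)]
          exact B.2.2
  filter_upwards [measure_eq_zero_iff_ae_notMem.mp hN] with y hy
  intro V hV hyV
  by_contra hpos
  obtain ⟨B, hBb, hyB, hBV⟩ := hbasis.exists_subset_of_mem_open hyV hV
  refine hy (Set.mem_biUnion ⟨hBb, ?_⟩ hyB)
  have hle : volume (h ⁻¹' B ∩ Y) ≤ volume (h ⁻¹' V ∩ Y) :=
    measure_mono (Set.inter_subset_inter_left _ (Set.preimage_mono hBV))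
  have hV0 : volume (h ⁻¹' V ∩ Y) = 0 := by simpa using le_of_not_gt hpos
  exact le_antisymm (hV0 ▸ hle) zero_le

/-- If `Ψ` is continuous on `Y × essim(h|_Y)` and `Ψ(y, h(y)) = 0`
a.e. on the open set `Y`, then `Ψ(y⋆, u) = 0` for every `y⋆ ∈ Y` and every ess-im
accumulation value `u ∈ A(h; y⋆)`. -/
theorem ae_identity_extends_to_accumulation_values
    {p n q : ℕ} (h : (Fin p → ℝ) → (Fin n → ℝ)) (hmeas : Measurable h)
    (Y : Set (Fin p → ℝ)) (hYopen : IsOpen Y)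
    (hbd : ∃ C : ℝ, ∀ᵐ y ∂(volume.restrict Y), ‖h y‖ ≤ C)
    (Ψ : (Fin p → ℝ) × (Fin n → ℝ) → (Fin q → ℝ))
    (hΨ : ContinuousOn Ψ (Y ×ˢ essimOn h Y))
    (hae : ∀ᵐ y ∂(volume.restrict Y), Ψ (y, h y) = 0) :
    ∀ ys ∈ Y, ∀ u ∈ AessP h ys, Ψ (ys, u) = 0 := by
  intro ys hys u hu
  -- a ball around ys inside Y
  obtain ⟨r₀, hr₀, hball⟩ := Metric.isOpen_iff.mp hYopen ys hys
  have huY : u ∈ essimOn h Y := by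
    have := Set.mem_iInter₂.mp hu r₀ hr₀
    exact essimOn_mono h hball this
  by_contra hne
  have hεpos : 0 < ‖Ψ (ys, u)‖ := by simpa [norm_pos_iff] using hne
  -- continuity within the product set at (ys, u)
  have hcw : ContinuousWithinAt Ψ (Y ×ˢ essimOn h Y) (ys, u) :=
    hΨ (ys, u) ⟨hys, huY⟩
  rw [Metric.continuousWithinAt_iff] at hcw
  obtain ⟨δ, hδ, hδprop⟩ := hcw ‖Ψ (ys, u)‖ hεpos
  set r : ℝ := min r₀ δ with hr
  have hrpos : 0 < r := lt_min hr₀ hδ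
  have hposmeas : 0 < volume (h ⁻¹' (Metric.ball u δ) ∩ Metric.ball ys r) :=
    Set.mem_iInter₂.mp hu r hrpos (Metric.ball u δ) Metric.isOpen_ball
      (Metric.mem_ball_self hδ)
  set S : Set (Fin p → ℝ) := h ⁻¹' (Metric.ball u δ) ∩ Metric.ball ys r with hS
  have hSmeas : MeasurableSet S :=
    (Metric.isOpen_ball.measurableSet.preimage hmeas).inter
      Metric.isOpen_ball.measurableSet
  have hSsubY : S ⊆ Y := fun y hy =>
    hball (Metric.ball_subset_ball (min_le_left _ _) hy.2)
  have hSrestrict : 0 < (volume.restrict Y) S := by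
    rw [Measure.restrict_apply hSmeas, Set.inter_eq_self_of_subset_left hSsubY]
    exact hposmeas
  -- the good a.e. set
  have hgood : ∀ᵐ y ∂(volume.restrict Y),
      Ψ (y, h y) = 0 ∧ h y ∈ essimOn h Y :=
    hae.and (ae_mem_essimOn h hmeas Y hYopen.measurableSet)
  have : ∃ y, y ∈ S ∧ (Ψ (y, h y) = 0 ∧ h y ∈ essimOn h Y) := by
    by_contra hcon
    push_neg at hcon
    have : (volume.restrict Y) S = 0 := by
      refine measure_mono_null (fun y hy => ?_) (ae_iff.mp hgood)
      exact fun hgy => hcon y hy hgy.1 hgy.2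
    exact absurd this (ne_of_gt hSrestrict)
  obtain ⟨y, hyS, hΨy, hyess⟩ := this
  have hmem : (y, h y) ∈ Y ×ˢ essimOn h Y := ⟨hSsubY hyS, hyess⟩
  have hdist : dist (y, h y) (ys, u) < δ := by
    rw [Prod.dist_eq]
    refine max_lt (lt_of_lt_of_le ?_ (min_le_right r₀ δ)) ?_
    · exact hyS.2
    · exact hyS.1
  have := hδprop hmem hdist
  rw [hΨy, dist_zero_left] at this
  exact lt_irrefl _ this

end
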